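/- Suppose Q : [0,∞) → End(E) solves the linear ODE Q'(t) = −(1/2)·A(t)·Q(t) with Q(0) = id, where E is a finite-dimensional inner product space and each A(t) is symmetric with A(t) ≥ 2K·id. Then the operator norm satisfies ‖Q(t)‖ ≤ e^{−Kt} for all t ≥ 0. -/

import Mathlib

open Real

/-- Damped parallel transport bound: if `Q' = −(1/2)AQ`, `Q(0) = id`, where
each `A(t)` is symmetric with `A(t) ≥ 2K·id`, then `‖Q(t)‖ ≤ e^{−Kt}`. -/
theorem damped_parallel_transport_norm_bound
    {E : Type*} [NormedAddCommGroup E] [InnerProductSpace ℝ E]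
    [FiniteDimensional ℝ E] (K : ℝ) (A : ℝ → E →L[ℝ] E)
    (hAcont : ContinuousOn A (Set.Ici 0))
    (hAsym : ∀ t ∈ Set.Ici (0 : ℝ), ∀ v w : E,
      (inner ℝ (A t v) w : ℝ) = inner ℝ v (A t w))
    (hAK : ∀ t ∈ Set.Ici (0 : ℝ), ∀ v : E,
      2 * K * ‖v‖ ^ 2 ≤ (inner ℝ (A t v) v : ℝ))
    (Q : ℝ → E →L[ℝ] E) (hQ0 : Q 0 = ContinuousLinearMap.id ℝ E)
    (hQ : ∀ t ∈ Set.Ici (0 : ℝ),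
      HasDerivAt Q (-(1 / 2 : ℝ) • ((A t).comp (Q t))) t) :
    ∀ t ∈ Set.Ici (0 : ℝ), ‖Q t‖ ≤ Real.exp (-K * t) := by
  intro t ht
  apply ContinuousLinearMap.opNorm_le_bound _ (Real.exp_nonneg _)
  intro v
  -- weighted energy function
  set f : ℝ → ℝ := fun s => Real.exp (2 * K * s) * (inner ℝ (Q s v) (Q s v) : ℝ)
    with hf
  -- derivative of f at points of Ici 0
  have hderiv : ∀ s ∈ Set.Ici (0 : ℝ), HasDerivAt f
      (Real.exp (2 * K * s) * (2 * K * (inner ℝ (Q s v) (Q s v) : ℝ)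
        - (inner ℝ (A s (Q s v)) (Q s v) : ℝ))) s := by
    intro s hs
    have hu : HasDerivAt (fun s => Q s v)
        ((-(1 / 2 : ℝ) • ((A s).comp (Q s))) v) s := by
      simpa using (hQ s hs).clm_apply (hasDerivAt_const s v)
    have hg : HasDerivAt (fun s => (inner ℝ (Q s v) (Q s v) : ℝ))
        ((inner ℝ (Q s v) ((-(1 / 2 : ℝ) • ((A s).comp (Q s))) v) : ℝ)
          + (inner ℝ ((-(1 / 2 : ℝ) • ((A s).comp (Q s))) v) (Q s v) : ℝ)) s :=
      hu.inner ℝ hu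
    have he : HasDerivAt (fun s => Real.exp (2 * K * s))
        (Real.exp (2 * K * s) * (2 * K)) s := by
      simpa using ((hasDerivAt_id s).const_mul (2 * K)).exp
    have := he.mul hg
    refine this.congr_deriv ?_
    have hsym : (inner ℝ (Q s v) ((A s) (Q s v)) : ℝ)
        = (inner ℝ ((A s) (Q s v)) (Q s v) : ℝ) := real_inner_comm _ _
    simp only [ContinuousLinearMap.smul_apply, ContinuousLinearMap.coe_comp',
      Function.comp_apply, real_inner_smul_left, real_inner_smul_right, hsym]
    ring
  -- f is antitone on Ici 0
  have hanti : AntitoneOn f (Set.Ici 0) := by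
    apply antitoneOn_of_deriv_nonpos (convex_Ici 0)
    · exact fun s hs => (hderiv s hs).continuousAt.continuousWithinAt
    · intro s hs
      rw [interior_Ici] at hs
      exact (hderiv s (Set.mem_Ici.mpr (le_of_lt (Set.mem_Ioi.mp hs)))).differentiableAt.differentiableWithinAt
    · intro s hs
      rw [interior_Ici] at hs
      rw [(hderiv s (Set.mem_Ici.mpr (le_of_lt (Set.mem_Ioi.mp hs)))).deriv]
      apply mul_nonpos_of_nonneg_of_nonpos (Real.exp_nonneg _)
      have := hAK s (Set.mem_Ici.mpr (le_of_lt (Set.mem_Ioi.mp hs))) (Q s v)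
      rw [← real_inner_self_eq_norm_sq] at this
      linarith
  have hf0 : f 0 = ‖v‖ ^ 2 := by
    simp [hf, hQ0, real_inner_self_eq_norm_sq]
  have hle : f t ≤ ‖v‖ ^ 2 := hf0 ▸ hanti (Set.mem_Ici.mpr le_rfl) ht ht
  -- unfold and conclude
  have hkey : Real.exp (2 * K * t) * ‖Q t v‖ ^ 2 ≤ ‖v‖ ^ 2 := by
    have := hle
    simp only [hf, real_inner_self_eq_norm_sq] at this
    exact this
  have h1 : ‖Q t v‖ ^ 2 ≤ (Real.exp (-K * t) * ‖v‖) ^ 2 := by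
    have hepos : (0 : ℝ) < Real.exp (2 * K * t) := Real.exp_pos _
    rw [mul_pow, ← Real.exp_nat_mul]
    have : Real.exp ((2 : ℕ) * (-K * t)) = (Real.exp (2 * K * t))⁻¹ := by
      rw [← Real.exp_neg]; ring_nf
    rw [this, inv_mul_eq_div, le_div_iff₀ hepos, mul_comm]
    exact hkey
  have h2 : (0 : ℝ) ≤ Real.exp (-K * t) * ‖v‖ :=
    mul_nonneg (Real.exp_nonneg _) (norm_nonneg _)
  exact (pow_le_pow_iff_left₀ (norm_nonneg _) h2 two_ne_zero).mp h1
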